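/- Let A be a 2m-th order n-dimensional Hermitian tensor which is CPS and a strict LLK tensor (all diagonal entries positive and (a_{i...iī...ī} − r_i^j(A)) a_{j...jj̄...j̄} > r_j(A)|a_{ij...jj̄...j̄}| for all i ≠ j). Then every Ĥ-eigenvalue of A is positive; consequently A is Hermitian positive definite. -/

import Mathlib

/-!
Let `x` be an `Ĥ`-eigenvector for `λ`, `p` a coordinate of maximal modulus and `q ≠ p`.
Isolating the diagonal term of the `p`-th and `q`-th eigen-equations and bounding every
other monomial by `|x_p|^(2m+1)`, except `a_{pq…q q̄…q̄} x_q^m x̄_q^(m+1)`, gives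
`|λ - a_p| |x_p|^(2m+1) ≤ |a_{pq…q}| |x_q|^(2m+1) + r_p^q |x_p|^(2m+1)` and
`|λ - a_q| |x_q|^(2m+1) ≤ r_q |x_p|^(2m+1)`, whose product is the LLK inclusion.
If `Re λ ≤ 0`, then `|λ - a_i| ≥ Re a_i`, and the inclusion contradicts strict LLK.

For positive definiteness, let `λ` be the minimum of `Re f(y) / ∑ |y_a|^(2m+2)`, attained at `x`
on the unit sphere. The tensor `A - λ ℐ` is CPS and its form is nonnegative and vanishes at `x`,
so its gradient vanishes there: `(λ, x)` is an `Ĥ`-eigenpair. Hence `λ > 0` and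
`f(y) ≥ λ ∑ |y_a|^(2m+2) > 0` for `y ≠ 0`.
-/

open Complex Finset

/-- The conjugate polynomial associated to a `2m`-th order `n`-dimensional complex tensor. -/
noncomputable def fpoly {n m : ℕ} (A : (Fin m → Fin n) → (Fin m → Fin n) → ℂ)
    (x : Fin n → ℂ) : ℂ :=
  ∑ i : Fin m → Fin n, ∑ j : Fin m → Fin n,
    A i j * (∏ k, x (i k)) * ∏ k, (starRingEnd ℂ) (x (j k))

/-- Hermitian condition for a `2m`-th order tensor. -/
def IsHermitianTensor {n m : ℕ} (A : (Fin m → Fin n) → (Fin m → Fin n) → ℂ) : Prop :=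
  ∀ i j, (starRingEnd ℂ) (A i j) = A j i

/-- Conjugate partial-symmetric tensor. -/
def IsCPS {n m : ℕ} (A : (Fin m → Fin n) → (Fin m → Fin n) → ℂ) : Prop :=
  IsHermitianTensor A ∧
    ∀ (i j : Fin m → Fin n) (σ τ : Equiv.Perm (Fin m)), A (i ∘ σ) (j ∘ τ) = A i j

/-- `λ` is an `Ĥ`-eigenvalue of the `2(m+1)`-th order tensor `A` with eigenvector `x`. -/
noncomputable def IsHhatEigenpair {n m : ℕ}
    (A : (Fin (m+1) → Fin n) → (Fin (m+1) → Fin n) → ℂ)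
    (lam : ℂ) (x : Fin n → ℂ) : Prop :=
  x ≠ 0 ∧ ∀ p : Fin n,
    (∑ i : Fin m → Fin n, ∑ j : Fin (m+1) → Fin n,
      A (Fin.cons p i) j * (∏ k, x (i k)) * ∏ k, (starRingEnd ℂ) (x (j k)))
    = lam * (starRingEnd ℂ) (x p) * ((‖x p‖ : ℂ)) ^ (2*m)

/-- Diagonal entry `a_{p...p p̄...p̄}`. -/
noncomputable def diagEntry {n m : ℕ}
    (A : (Fin m → Fin n) → (Fin m → Fin n) → ℂ) (p : Fin n) : ℂ :=
  A (fun _ => p) (fun _ => p)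

/-- `r_p(A)`: sum of moduli of the off-diagonal entries of the `p`-th slice. -/
noncomputable def rOff {n m : ℕ}
    (A : (Fin (m+1) → Fin n) → (Fin (m+1) → Fin n) → ℂ) (p : Fin n) : ℝ :=
  ∑ i : Fin m → Fin n, ∑ j : Fin (m+1) → Fin n,
    if i = (fun _ => p) ∧ j = (fun _ => p) then 0
    else ‖A (Fin.cons p i) j‖

/-- `r'_p(A)`: sum over tuples in which no index equals `p`. -/
noncomputable def rPrime {n m : ℕ}
    (A : (Fin (m+1) → Fin n) → (Fin (m+1) → Fin n) → ℂ) (p : Fin n) : ℝ :=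
  ∑ i : Fin m → Fin n, ∑ j : Fin (m+1) → Fin n,
    if (∀ k, i k ≠ p) ∧ (∀ k, j k ≠ p) then ‖A (Fin.cons p i) j‖ else 0

/-- `r̂_p(A) = r_p(A) - r'_p(A)`. -/
noncomputable def rHat {n m : ℕ}
    (A : (Fin (m+1) → Fin n) → (Fin (m+1) → Fin n) → ℂ) (p : Fin n) : ℝ :=
  rOff A p - rPrime A p

/-- Entry `a_{p q...q q̄...q̄}`. -/
noncomputable def aSlice {n m : ℕ}
    (A : (Fin (m+1) → Fin n) → (Fin (m+1) → Fin n) → ℂ) (p q : Fin n) : ℂ :=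
  A (Fin.cons p (fun _ => q)) (fun _ => q)

/-- `r_p^q(A) = r_p(A) - |a_{p q...q q̄...q̄}|`. -/
noncomputable def rOffSub {n m : ℕ}
    (A : (Fin (m+1) → Fin n) → (Fin (m+1) → Fin n) → ℂ) (p q : Fin n) : ℝ :=
  rOff A p - ‖aSlice A p q‖

/-- Hermitian positive definiteness. -/
def HermitianPD {n m : ℕ} (A : (Fin m → Fin n) → (Fin m → Fin n) → ℂ) : Prop :=
  ∀ x : Fin n → ℂ, x ≠ 0 → ∃ r : ℝ, fpoly A x = r ∧ 0 < r

/-- Hermitian positive semidefiniteness. -/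
def HermitianPSD {n m : ℕ} (A : (Fin m → Fin n) → (Fin m → Fin n) → ℂ) : Prop :=
  ∀ x : Fin n → ℂ, ∃ r : ℝ, fpoly A x = r ∧ 0 ≤ r

open ComplexConjugate

abbrev CTensor (n M : ℕ) : Type := (Fin M → Fin n) → (Fin M → Fin n) → ℂ

section Tensor

variable {n m : ℕ}

theorem Fin.cons_eq_const_iff {α : Type*} {p a : α} {i : Fin m → α} :
    (Fin.cons p i : Fin (m + 1) → α) = (fun _ => a) ↔ p = a ∧ i = fun _ => a := by
  conv_lhs => rw [← Fin.cons_self_tail (fun _ : Fin (m + 1) => a)]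
  exact Fin.cons_inj

theorem comp_perm_eq_const_iff {α ι : Type*} {i : ι → α} {a : α} (σ : Equiv.Perm ι) :
    i ∘ σ = (fun _ => a) ↔ i = fun _ => a := by
  refine ⟨fun h => funext fun k => ?_, fun h => by rw [h]; rfl⟩
  simpa using congrFun h (σ.symm k)

theorem sum_cons_eq_sum {β : Type*} [AddCommMonoid β] (F : (Fin (m + 1) → Fin n) → β) :
    ∑ p, ∑ i : Fin m → Fin n, F (Fin.cons p i) = ∑ i, F i := by
  rw [← (Fin.consEquiv fun _ => Fin n).sum_comp, Fintype.sum_prod_type]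
  rfl

/-- The `p`-th entry of `𝒜 x^m x̄^(m+1)`. -/
noncomputable def contract (A : CTensor n (m + 1)) (x : Fin n → ℂ) (p : Fin n) : ℂ :=
  ∑ i : Fin m → Fin n, ∑ j : Fin (m + 1) → Fin n,
    A (Fin.cons p i) j * (∏ k, x (i k)) * ∏ k, conj (x (j k))

def unitTensor (n M : ℕ) : CTensor n M :=
  fun i j => ∑ a, if i = (fun _ => a) ∧ j = (fun _ => a) then 1 else 0

theorem fpoly_sub_smul {M : ℕ} (A B : CTensor n M) (c : ℂ) (x : Fin n → ℂ) :
    fpoly (A - c • B) x = fpoly A x - c * fpoly B x := by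
  simp only [fpoly, Pi.sub_apply, Pi.smul_apply, smul_eq_mul, sub_mul, mul_sum,
    sum_sub_distrib, mul_assoc]

theorem contract_sub_smul (A B : CTensor n (m + 1)) (c : ℂ) (x : Fin n → ℂ) (p : Fin n) :
    contract (A - c • B) x p = contract A x p - c * contract B x p := by
  simp only [contract, Pi.sub_apply, Pi.smul_apply, smul_eq_mul, sub_mul, mul_sum,
    sum_sub_distrib, mul_assoc]

theorem fpoly_smul {M : ℕ} (A : CTensor n M) (c : ℂ) (y : Fin n → ℂ) :
    fpoly A (c • y) = ((‖c‖ ^ (2 * M) : ℝ) : ℂ) * fpoly A y := by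
  have hc : c ^ M * conj c ^ M = ((‖c‖ ^ (2 * M) : ℝ) : ℂ) := by
    rw [← mul_pow, mul_conj', pow_mul]; push_cast; rfl
  simp only [fpoly, Pi.smul_apply, smul_eq_mul, map_mul, prod_mul_distrib, prod_const,
    card_univ, Fintype.card_fin, mul_sum, ← hc]
  exact sum_congr rfl fun i _ => sum_congr rfl fun j _ => by ring

theorem re_fpoly_smul {M : ℕ} (A : CTensor n M) (c : ℂ) (y : Fin n → ℂ) :
    (fpoly A (c • y)).re = ‖c‖ ^ (2 * M) * (fpoly A y).re := by
  rw [fpoly_smul, re_ofReal_mul]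

theorem fpoly_zero (A : CTensor n (m + 1)) : fpoly A 0 = 0 := by
  simp [fpoly]

theorem continuous_fpoly {M : ℕ} (A : CTensor n M) : Continuous (fpoly A) := by
  unfold fpoly
  fun_prop

theorem IsHermitianTensor.im_fpoly {M : ℕ} {A : CTensor n M}
    (hA : IsHermitianTensor A) (x : Fin n → ℂ) : (fpoly A x).im = 0 := by
  rw [← conj_eq_iff_im, fpoly, map_sum, sum_comm]
  refine sum_congr rfl fun i _ => ?_
  rw [map_sum]
  refine sum_congr rfl fun j _ => ?_
  simp only [map_mul, map_prod, conj_conj, hA i j]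
  ring

theorem IsCPS.sub_real_smul {M : ℕ} {A B : CTensor n M}
    (hA : IsCPS A) (hB : IsCPS B) (c : ℝ) : IsCPS (A - (c : ℂ) • B) := by
  refine ⟨fun i j => ?_, fun i j σ τ => ?_⟩
  · simp only [Pi.sub_apply, Pi.smul_apply, smul_eq_mul, map_sub, map_mul, conj_ofReal,
      hA.1 i j, hB.1 i j]
  · simp only [Pi.sub_apply, Pi.smul_apply, hA.2, hB.2]

theorem fpoly_eq_sum_mul_contract (A : CTensor n (m + 1)) (x : Fin n → ℂ) :
    fpoly A x = ∑ p, x p * contract A x p := by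
  rw [fpoly, ← sum_cons_eq_sum]
  simp only [contract, mul_sum, Fin.prod_univ_succ, Fin.cons_zero, Fin.cons_succ]
  exact sum_congr rfl fun p _ => sum_congr rfl fun i _ => sum_congr rfl fun j _ => by ring

end Tensor

section UnitTensor

variable {n m : ℕ}

theorem isCPS_unitTensor (n M : ℕ) : IsCPS (unitTensor n M) := by
  refine ⟨fun i j => ?_, fun i j σ τ => ?_⟩
  · simp only [unitTensor, map_sum, apply_ite, map_one, map_zero, and_comm]
  · simp only [unitTensor, comp_perm_eq_const_iff]

theorem unitTensor_cons (p : Fin n) (i : Fin m → Fin n) (j : Fin (m + 1) → Fin n) :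
    unitTensor n (m + 1) (Fin.cons p i) j =
      if i = (fun _ => p) ∧ j = (fun _ => p) then 1 else 0 := by
  simp only [unitTensor, Fin.cons_eq_const_iff, and_assoc, ite_and, sum_ite_eq, mem_univ,
    if_true]

theorem contract_unitTensor (x : Fin n → ℂ) (p : Fin n) :
    contract (unitTensor n (m + 1)) x p = x p ^ m * conj (x p) ^ (m + 1) := by
  simp [contract, unitTensor_cons, ite_and]

theorem pow_mul_conj_pow_succ (z : ℂ) (m : ℕ) :
    z ^ m * conj z ^ (m + 1) = conj z * (‖z‖ : ℂ) ^ (2 * m) := by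
  rw [pow_succ, ← mul_assoc, ← mul_pow, mul_conj', pow_mul]
  ring

theorem fpoly_unitTensor (y : Fin n → ℂ) :
    fpoly (unitTensor n (m + 1)) y = ((∑ a, ‖y a‖ ^ (2 * (m + 1)) : ℝ) : ℂ) := by
  rw [fpoly_eq_sum_mul_contract]
  push_cast
  refine sum_congr rfl fun a _ => ?_
  rw [contract_unitTensor, ← mul_assoc, ← pow_succ', ← mul_pow, mul_conj', pow_mul]

theorem re_fpoly_unitTensor_pos {y : Fin n → ℂ} (hy : y ≠ 0) :
    0 < (fpoly (unitTensor n (m + 1)) y).re := by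
  obtain ⟨a, ha⟩ := Function.ne_iff.mp hy
  rw [fpoly_unitTensor, ofReal_re]
  exact sum_pos' (fun b _ => by positivity) ⟨a, mem_univ a, pow_pos (norm_pos_iff.mpr ha) _⟩

end UnitTensor

section Eigenpair

variable {n m : ℕ} {A : CTensor n (m + 1)} {lam : ℂ} {x : Fin n → ℂ}

theorem isHhatEigenpair_iff : IsHhatEigenpair A lam x ↔
    x ≠ 0 ∧ ∀ p, contract A x p = lam * contract (unitTensor n (m + 1)) x p := by
  simp only [IsHhatEigenpair, contract_unitTensor, pow_mul_conj_pow_succ, ← mul_assoc]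
  rfl

theorem IsHhatEigenpair.fpoly_eq (h : IsHhatEigenpair A lam x) :
    fpoly A x = lam * fpoly (unitTensor n (m + 1)) x := by
  simp only [fpoly_eq_sum_mul_contract, (isHhatEigenpair_iff.mp h).2, mul_sum]
  exact sum_congr rfl fun p _ => by ring

theorem IsHhatEigenpair.im_eq_zero (hA : IsHermitianTensor A) (h : IsHhatEigenpair A lam x) :
    lam.im = 0 := by
  have him := hA.im_fpoly x
  have hN := re_fpoly_unitTensor_pos (m := m) h.1
  rw [h.fpoly_eq, fpoly_unitTensor, im_mul_ofReal] at him
  rw [fpoly_unitTensor, ofReal_re] at hN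
  exact (mul_eq_zero.mp him).resolve_right hN.ne'

end Eigenpair

section Inclusion

variable {n m : ℕ} {A : CTensor n (m + 1)} {lam : ℂ} {x : Fin n → ℂ}

def sliceOffDiag (p : Fin n) : Finset ((Fin m → Fin n) × (Fin (m + 1) → Fin n)) :=
  univ.erase (fun _ => p, fun _ => p)

theorem rOff_eq_sum_sliceOffDiag (A : CTensor n (m + 1)) (p : Fin n) :
    rOff A p = ∑ z ∈ sliceOffDiag p, ‖A (Fin.cons p z.1) z.2‖ := by
  have hd : ((fun _ => p, fun _ => p) : (Fin m → Fin n) × (Fin (m + 1) → Fin n)) ∈ univ :=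
    mem_univ _
  rw [rOff, ← Fintype.sum_prod_type', ← sum_erase_add _ _ hd]
  simp only [and_self, ite_true, add_zero]
  exact sum_congr rfl fun z hz => if_neg fun h => (ne_of_mem_erase hz) (Prod.ext h.1 h.2)

theorem rOff_nonneg (A : CTensor n (m + 1)) (p : Fin n) : 0 ≤ rOff A p := by
  rw [rOff_eq_sum_sliceOffDiag]
  exact sum_nonneg fun _ _ => norm_nonneg _

theorem contract_eq_diagEntry_add_sum_sliceOffDiag (A : CTensor n (m + 1)) (x : Fin n → ℂ)
    (p : Fin n) :
    contract A x p = diagEntry A p * contract (unitTensor n (m + 1)) x p +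
      ∑ z ∈ sliceOffDiag p,
        A (Fin.cons p z.1) z.2 * (∏ k, x (z.1 k)) * ∏ k, conj (x (z.2 k)) := by
  have hd : ((fun _ => p, fun _ => p) : (Fin m → Fin n) × (Fin (m + 1) → Fin n)) ∈ univ :=
    mem_univ _
  rw [contract, ← Fintype.sum_prod_type', ← add_sum_erase _ _ hd, contract_unitTensor,
    diagEntry, Fin.cons_eq_const_iff.mpr ⟨rfl, rfl⟩]
  simp only [sliceOffDiag, prod_const, card_univ, Fintype.card_fin]
  ring

theorem prod_norm_le_pow {M : ℕ} {r : ℝ} (hx : ∀ a, ‖x a‖ ≤ r) (i : Fin M → Fin n) :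
    ∏ k, ‖x (i k)‖ ≤ r ^ M := by
  calc ∏ k, ‖x (i k)‖ ≤ ∏ _k : Fin M, r :=
        prod_le_prod (fun _ _ => norm_nonneg _) fun k _ => hx (i k)
    _ = r ^ M := by simp

theorem prod_mul_prod_norm_le {p : Fin n} (hp : ∀ a, ‖x a‖ ≤ ‖x p‖)
    (z : (Fin m → Fin n) × (Fin (m + 1) → Fin n)) :
    (∏ k, ‖x (z.1 k)‖) * ∏ k, ‖x (z.2 k)‖ ≤ ‖x p‖ ^ (2 * m + 1) := by
  rw [two_mul, add_assoc, pow_add]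
  exact mul_le_mul (prod_norm_le_pow hp _) (prod_norm_le_pow hp _) (by positivity) (by positivity)

theorem IsHhatEigenpair.norm_sub_diagEntry_mul_le (h : IsHhatEigenpair A lam x) (p : Fin n) :
    ‖lam - diagEntry A p‖ * ‖x p‖ ^ (2 * m + 1) ≤
      ∑ z ∈ sliceOffDiag p,
        ‖A (Fin.cons p z.1) z.2‖ * ((∏ k, ‖x (z.1 k)‖) * ∏ k, ‖x (z.2 k)‖) := by
  have heq := (isHhatEigenpair_iff.mp h).2 p
  rw [contract_eq_diagEntry_add_sum_sliceOffDiag] at heq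
  calc ‖lam - diagEntry A p‖ * ‖x p‖ ^ (2 * m + 1)
      = ‖(lam - diagEntry A p) * contract (unitTensor n (m + 1)) x p‖ := by
        rw [norm_mul, contract_unitTensor, norm_mul, norm_pow, norm_pow, Complex.norm_conj,
          ← pow_add, two_mul, add_assoc]
    _ = ‖∑ z ∈ sliceOffDiag p,
          A (Fin.cons p z.1) z.2 * (∏ k, x (z.1 k)) * ∏ k, conj (x (z.2 k))‖ := by
        rw [sub_mul, ← heq, add_sub_cancel_left]
    _ ≤ _ := (norm_sum_le _ _).trans_eq <| by
        simp only [norm_mul, norm_prod, Complex.norm_conj, mul_assoc]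

theorem IsHhatEigenpair.norm_sub_diagEntry_mul_le_rOff (h : IsHhatEigenpair A lam x)
    {p : Fin n} (hp : ∀ a, ‖x a‖ ≤ ‖x p‖) (q : Fin n) :
    ‖lam - diagEntry A q‖ * ‖x q‖ ^ (2 * m + 1) ≤ rOff A q * ‖x p‖ ^ (2 * m + 1) := by
  refine (h.norm_sub_diagEntry_mul_le q).trans ?_
  rw [rOff_eq_sum_sliceOffDiag, sum_mul]
  exact sum_le_sum fun z _ => mul_le_mul_of_nonneg_left (prod_mul_prod_norm_le hp z) (norm_nonneg _)

theorem IsHhatEigenpair.norm_sub_diagEntry_mul_le_aSlice (h : IsHhatEigenpair A lam x)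
    {p q : Fin n} (hp : ∀ a, ‖x a‖ ≤ ‖x p‖) (hpq : p ≠ q) :
    ‖lam - diagEntry A p‖ * ‖x p‖ ^ (2 * m + 1) ≤
      ‖aSlice A p q‖ * ‖x q‖ ^ (2 * m + 1) + rOffSub A p q * ‖x p‖ ^ (2 * m + 1) := by
  have hq : ((fun _ => q, fun _ => q) : (Fin m → Fin n) × (Fin (m + 1) → Fin n)) ∈
      sliceOffDiag p :=
    mem_erase.mpr ⟨fun h => hpq (congrFun (congrArg Prod.snd h) 0).symm, mem_univ _⟩
  refine (h.norm_sub_diagEntry_mul_le p).trans ?_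
  rw [← add_sum_erase _ _ hq, rOffSub, rOff_eq_sum_sliceOffDiag, ← add_sum_erase _ _ hq]
  simp only [aSlice, prod_const, card_univ, Fintype.card_fin, add_sub_cancel_left, sum_mul]
  rw [← pow_add, show m + (m + 1) = 2 * m + 1 by ring]
  gcongr with z
  exact prod_mul_prod_norm_le hp z

theorem IsHhatEigenpair.eq_diagEntry_or_llk (h : IsHhatEigenpair A lam x) :
    (∃ p, lam = diagEntry A p) ∨ ∃ p q, p ≠ q ∧
      (‖lam - diagEntry A p‖ - rOffSub A p q) * ‖lam - diagEntry A q‖ ≤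
        ‖aSlice A p q‖ * rOff A q := by
  obtain ⟨a, ha⟩ := Function.ne_iff.mp h.1
  have : Nonempty (Fin n) := ⟨a⟩
  obtain ⟨p, hp⟩ := Finite.exists_max fun b => ‖x b‖
  have hs : 0 < ‖x p‖ ^ (2 * m + 1) := pow_pos ((norm_pos_iff.mpr ha).trans_le (hp a)) _
  by_cases hq : ∀ q, p = q
  · have hempty : sliceOffDiag (m := m) p = ∅ :=
      eq_empty_of_forall_notMem fun z hz => ne_of_mem_erase hz <|
        Prod.ext (funext fun _ => (hq _).symm) (funext fun _ => (hq _).symm)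
    have hrow_p := h.norm_sub_diagEntry_mul_le p
    rw [hempty, sum_empty] at hrow_p
    exact .inl ⟨p, sub_eq_zero.mp (norm_le_zero_iff.mp (nonpos_of_mul_nonpos_left hrow_p hs))⟩
  obtain ⟨q, hpq⟩ := not_forall.mp hq
  have hrow_p := h.norm_sub_diagEntry_mul_le_aSlice hp hpq
  have hrow_q := h.norm_sub_diagEntry_mul_le_rOff hp q
  refine .inr ⟨p, q, hpq, le_of_mul_le_mul_right ?_ hs⟩
  -- multiply the row-`p` bound by `‖lam - a_q‖` and chain it with the row-`q` bound
  rcases le_or_gt (‖lam - diagEntry A p‖ - rOffSub A p q) 0 with hX | hX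
  · nlinarith [rOff_nonneg A q, norm_nonneg (aSlice A p q), norm_nonneg (lam - diagEntry A q)]
  · nlinarith [norm_nonneg (aSlice A p q), norm_nonneg (lam - diagEntry A q),
      pow_nonneg (norm_nonneg (x q)) (2 * m + 1)]

theorem IsHhatEigenpair.re_pos (hdiag : ∀ p, 0 < (diagEntry A p).re)
    (hsllk : ∀ p q, p ≠ q →
      rOff A q * ‖aSlice A p q‖ < ((diagEntry A p).re - rOffSub A p q) * (diagEntry A q).re)
    (h : IsHhatEigenpair A lam x) : 0 < lam.re := by
  by_contra! hlam
  have hre : ∀ p, (diagEntry A p).re ≤ ‖lam - diagEntry A p‖ := fun p => by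
    rw [norm_sub_rev]
    exact le_trans (by simp only [sub_re]; linarith) (re_le_norm _)
  rcases h.eq_diagEntry_or_llk with ⟨p, rfl⟩ | ⟨p, q, hpq, hllk⟩
  · exact (hdiag p).not_ge hlam
  · have hslk := hsllk p q hpq
    have hX : 0 < (diagEntry A p).re - rOffSub A p q := by
      by_contra! hX
      nlinarith [rOff_nonneg A q, norm_nonneg (aSlice A p q), hdiag q]
    have := mul_le_mul (sub_le_sub_right (hre p) _) (hre q) (hdiag q).le (hX.le.trans
      (sub_le_sub_right (hre p) _))
    linarith

end Inclusion

section Critical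

variable {n m : ℕ}

def monomialDeriv {M : ℕ} (x w : Fin n → ℂ) (i : Fin M → Fin n) : ℂ :=
  ∑ k, (∏ l ∈ univ.erase k, x (i l)) * w (i k)

theorem hasDerivAt_prod_line {M : ℕ} (x w : Fin n → ℂ) (i : Fin M → Fin n) :
    HasDerivAt (fun s : ℝ => ∏ k, (x + (s : ℂ) • w) (i k)) (monomialDeriv x w i) 0 := by
  have hline : ∀ a, HasDerivAt (fun s : ℝ => (x + (s : ℂ) • w) a) (w a) 0 := fun a => by
    simpa using ((hasDerivAt_id (0 : ℝ)).ofReal_comp.mul_const (w a)).const_add (x a)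
  simpa [monomialDeriv] using HasDerivAt.fun_finsetProd (u := univ) fun k _ => hline (i k)

theorem hasDerivAt_fpoly_line {M : ℕ} (B : CTensor n M)
    (x w : Fin n → ℂ) :
    HasDerivAt (fun s : ℝ => fpoly B (x + (s : ℂ) • w))
      (∑ i, ∑ j, B i j * (monomialDeriv x w i * conj (∏ k, x (j k)) +
        (∏ k, x (i k)) * conj (monomialDeriv x w j))) 0 := by
  simp only [fpoly, ← map_prod, mul_assoc]
  refine HasDerivAt.fun_sum fun i _ => HasDerivAt.fun_sum fun j _ => ?_
  have := ((hasDerivAt_prod_line x w i).mul (hasDerivAt_prod_line x w j).star).const_mul (B i j)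
  simpa using this

theorem prod_erase_zero_eq_prod_succ {M : ℕ} (g : Fin (M + 1) → ℂ) :
    ∏ l ∈ univ.erase 0, g l = ∏ l : Fin M, g l.succ := by
  rw [Fin.univ_succ, erase_cons, prod_map]
  rfl

theorem IsCPS.sum_mul_monomialDeriv {B : CTensor n (m + 1)}
    (hB : IsCPS B) (x w : Fin n → ℂ) (j : Fin (m + 1) → Fin n) :
    ∑ i, B i j * monomialDeriv x w i =
      (m + 1) * ∑ p, w p * ∑ i : Fin m → Fin n, B (Fin.cons p i) j * ∏ k, x (i k) := by
  have hslot : ∀ k : Fin (m + 1), ∑ i, B i j * ((∏ l ∈ univ.erase k, x (i l)) * w (i k)) =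
      ∑ i, B i j * ((∏ l ∈ univ.erase 0, x (i l)) * w (i 0)) := fun k => by
    -- reindex by `i ↦ i ∘ swap 0 k`: slot `k` moves to `0` and `B` is unchanged
    refine Fintype.sum_equiv (Equiv.arrowCongr (Equiv.swap 0 k) (Equiv.refl _)) _ _ fun i => ?_
    have hperm := hB.2 i j (Equiv.swap 0 k) 1
    simp only [Equiv.Perm.coe_one, Function.comp_id] at hperm
    rw [show Equiv.arrowCongr (Equiv.swap 0 k) (Equiv.refl _) i = i ∘ Equiv.swap 0 k from rfl,
      hperm]
    simp only [Function.comp_apply, Equiv.swap_apply_left]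
    congr 2
    refine prod_equiv (Equiv.swap 0 k) (fun l => ?_) fun l _ => by simp
    simp [Equiv.swap_apply_eq_iff]
  simp only [monomialDeriv, mul_sum]
  rw [sum_comm]
  simp only [hslot, sum_const, card_univ, Fintype.card_fin, nsmul_eq_mul, Nat.cast_add,
    Nat.cast_one]
  rw [← sum_cons_eq_sum]
  simp only [prod_erase_zero_eq_prod_succ, Fin.cons_zero, Fin.cons_succ, mul_sum]
  exact sum_congr rfl fun p _ => sum_congr rfl fun i _ => by ring

theorem IsCPS.hasDerivAt_re_fpoly_line
    {B : CTensor n (m + 1)} (hB : IsCPS B) (x w : Fin n → ℂ) :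
    HasDerivAt (fun s : ℝ => (fpoly B (x + (s : ℂ) • w)).re)
      (2 * (m + 1) * (∑ p, w p * contract B x p).re) 0 := by
  set D := ∑ i, ∑ j, B i j * (monomialDeriv x w i * conj (∏ k, x (j k)))
  have hD : D = ((m + 1 : ℝ) : ℂ) * ∑ p, w p * contract B x p := by
    calc D = ∑ j, (∑ i, B i j * monomialDeriv x w i) * conj (∏ k, x (j k)) := by
          simp only [D]; rw [sum_comm]; simp only [sum_mul, mul_assoc]
      _ = _ := by
          push_cast
          simp only [hB.sum_mul_monomialDeriv, contract, map_prod, mul_sum, sum_mul]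
          rw [sum_comm]
          refine sum_congr rfl fun p _ => ?_
          rw [sum_comm]
          exact sum_congr rfl fun i _ => sum_congr rfl fun j _ => by ring
  have hconj : ∑ i, ∑ j, B i j * ((∏ k, x (i k)) * conj (monomialDeriv x w j)) = conj D := by
    simp only [D, map_sum, map_mul, conj_conj, hB.1 _ _]
    rw [sum_comm]
    exact sum_congr rfl fun i _ => sum_congr rfl fun j _ => by ring
  refine (reCLM.hasFDerivAt.comp_hasDerivAt (0 : ℝ) (hasDerivAt_fpoly_line B x w)).congr_deriv ?_
  rw [reCLM_apply]
  simp only [mul_add, sum_add_distrib]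
  rw [hconj, show ∑ i, ∑ j, B i j * (monomialDeriv x w i * conj (∏ k, x (j k))) = D from rfl,
    add_re, conj_re, hD, re_ofReal_mul]
  ring

end Critical

section Minimum

variable {n m : ℕ}

theorem IsCPS.contract_eq_zero_of_re_fpoly_nonneg
    {B : CTensor n (m + 1)} (hB : IsCPS B)
    (hnonneg : ∀ y, 0 ≤ (fpoly B y).re) {x : Fin n → ℂ} (hx : (fpoly B x).re = 0)
    (p : Fin n) :
    contract B x p = 0 := by
  -- Along `x + s • w`, `Re f` has slope `2 (m + 1) ∑ ‖contract B x q‖²` at `s = 0`.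
  set w : Fin n → ℂ := fun q => conj (contract B x q)
  have hmin : IsLocalMin (fun s : ℝ => (fpoly B (x + (s : ℂ) • w)).re) 0 :=
    Filter.Eventually.of_forall fun s => by simpa [hx] using hnonneg _
  have hzero := hmin.hasDerivAt_eq_zero (hB.hasDerivAt_re_fpoly_line x w)
  have hsum : ∑ q, ‖contract B x q‖ ^ 2 = 0 := by
    simp only [w, conj_mul', ← ofReal_pow, ← ofReal_sum, ofReal_re] at hzero
    exact (mul_eq_zero.mp hzero).resolve_left (by positivity)
  exact norm_eq_zero.mp (pow_eq_zero_iff two_ne_zero |>.mp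
    ((sum_eq_zero_iff_of_nonneg fun q _ => by positivity).mp hsum p (mem_univ p)))

theorem exists_forall_mul_re_fpoly_le [Nonempty (Fin n)]
    (A B : CTensor n (m + 1))
    (hB : ∀ y, y ≠ 0 → 0 < (fpoly B y).re) :
    ∃ x, x ≠ 0 ∧ ∃ lam : ℝ, (fpoly A x).re = lam * (fpoly B x).re ∧
      ∀ y, lam * (fpoly B y).re ≤ (fpoly A y).re := by
  set Q : (Fin n → ℂ) → ℝ := fun y => (fpoly A y).re / (fpoly B y).re
  have hQ : ∀ y, y ≠ 0 → Q ((‖y‖⁻¹ : ℂ) • y) = Q y := fun y hy => by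
    simp only [Q, re_fpoly_smul]
    exact mul_div_mul_left _ _ (by simpa using hy)
  have hcont : ContinuousOn Q (Metric.sphere 0 1) :=
    (continuous_re.comp (continuous_fpoly A)).continuousOn.div
      (continuous_re.comp (continuous_fpoly B)).continuousOn
      fun y hy => (hB y (ne_zero_of_mem_unit_sphere ⟨y, hy⟩)).ne'
  obtain ⟨x, hx, hmin⟩ := (isCompact_sphere 0 1).exists_isMinOn
    (NormedSpace.sphere_nonempty.mpr zero_le_one) hcont
  have hx0 : x ≠ 0 := ne_zero_of_mem_unit_sphere ⟨x, hx⟩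
  refine ⟨x, hx0, Q x, (div_mul_cancel₀ _ (hB x hx0).ne').symm, fun y => ?_⟩
  rcases eq_or_ne y 0 with rfl | hy
  · simp [fpoly_zero]
  have hy1 : (‖y‖⁻¹ : ℂ) • y ∈ Metric.sphere 0 1 := by
    simpa using norm_smul_inv_norm (𝕜 := ℂ) hy
  have hle := isMinOn_iff.mp hmin _ hy1
  rw [hQ y hy] at hle
  exact (le_div_iff₀ (hB y hy)).mp hle

theorem IsCPS.exists_isHhatEigenpair [Nonempty (Fin n)]
    {A : CTensor n (m + 1)} (hA : IsCPS A) :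
    ∃ (lam : ℝ) (x : Fin n → ℂ), IsHhatEigenpair A lam x ∧
      ∀ y, lam * (fpoly (unitTensor n (m + 1)) y).re ≤ (fpoly A y).re := by
  obtain ⟨x, hx, lam, hxlam, hmin⟩ :=
    exists_forall_mul_re_fpoly_le A _ fun y hy => re_fpoly_unitTensor_pos (m := m) hy
  refine ⟨lam, x, isHhatEigenpair_iff.mpr ⟨hx, fun p => ?_⟩, hmin⟩
  have hcrit :=
    (hA.sub_real_smul (isCPS_unitTensor n (m + 1)) lam).contract_eq_zero_of_re_fpoly_nonneg
    (fun y => by rw [fpoly_sub_smul, sub_re, re_ofReal_mul]; linarith [hmin y])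
    (x := x) (by rw [fpoly_sub_smul, sub_re, re_ofReal_mul, hxlam, sub_self]) p
  rwa [contract_sub_smul, sub_eq_zero] at hcrit

end Minimum

theorem strict_llk_cps_eigenvalues_positive {n m : ℕ}
    (A : (Fin (m+1) → Fin n) → (Fin (m+1) → Fin n) → ℂ)
    (hcps : IsCPS A)
    (hdiag : ∀ p : Fin n, 0 < (diagEntry A p).re)
    (hsllk : ∀ p q : Fin n, p ≠ q →
      rOff A q * ‖aSlice A p q‖
        < ((diagEntry A p).re - rOffSub A p q) * (diagEntry A q).re) :
    (∀ (lam : ℂ) (x : Fin n → ℂ), IsHhatEigenpair A lam x → lam.im = 0 ∧ 0 < lam.re) ∧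
    HermitianPD A := by
  have heig : ∀ lam x, IsHhatEigenpair A lam x → lam.im = 0 ∧ 0 < lam.re :=
    fun lam x h => ⟨h.im_eq_zero hcps.1, h.re_pos hdiag hsllk⟩
  refine ⟨heig, fun y hy => ?_⟩
  obtain ⟨a, -⟩ := Function.ne_iff.mp hy
  have : Nonempty (Fin n) := ⟨a⟩
  obtain ⟨lam, x, hx, hmin⟩ := hcps.exists_isHhatEigenpair
  have hlam : 0 < lam := by simpa using (heig _ _ hx).2
  refine ⟨(fpoly A y).re, ext rfl (by simpa using hcps.1.im_fpoly y), ?_⟩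
  exact (mul_pos hlam (re_fpoly_unitTensor_pos hy)).trans_le (hmin y)
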